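/- arXiv:1506.05441 — 5 statements merged into one kernel-verified Lean document; each statement's English description precedes it below -/
import Mathlib

section
/- For any p ∈ ℂ with p/π not an integer and any x ∈ [-2, 2], the series ∑_{k=-∞}^{∞} e^{iπkx}/(π²k² - p²) converges and equals -cos(p - p|x|)/(p·sin(p)). -/
/-! The series is the Fourier series on `ℝ / 2ℤ` of the 2-periodic extension of
`t ↦ cos (p (1 - t))` from `[0, 2]`, a continuous function that equals `cos (p - p |t|)` on
`[-2, 2]`. The antiderivative `exp (c t) (c cos (p (1 - t)) - p sin (p (1 - t)))` of
`(c² + p²) exp (c t) cos (p (1 - t))` gives its `k`-th Fourier coefficient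
`-p sin p / (π² k² - p²)`. These coefficients are `O(1/k²)`, hence summable, so the series converges
pointwise to the function, and dividing by `-p sin p` gives the claim. -/

open Real Complex

theorem AddCircle.liftIco_coe_apply_of_mem_Icc {𝕜 B : Type*} [AddCommGroup 𝕜] [LinearOrder 𝕜]
    [IsOrderedAddMonoid 𝕜] [Archimedean 𝕜] {T a x : 𝕜} [hT : Fact (0 < T)] {f : 𝕜 → B}
    (hf : f a = f (a + T)) (hx : x ∈ Set.Icc a (a + T)) :
    AddCircle.liftIco T a f x = f x := by
  rcases eq_or_lt_of_le hx.1 with rfl | ha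
  · exact AddCircle.liftIco_coe_apply ⟨le_rfl, lt_add_of_pos_right _ hT.out⟩
  · rw [← AddCircle.liftIoc_eq_liftIco hf]
    exact AddCircle.liftIoc_coe_apply ⟨ha, hx.2⟩

theorem hasDerivAt_exp_mul_cos_one_sub (c p : ℂ) (t : ℝ) :
    HasDerivAt (fun t : ℝ => exp (c * t) * (c * cos (p * (1 - t)) - p * sin (p * (1 - t))))
      ((c ^ 2 + p ^ 2) * (exp (c * t) * cos (p * (1 - t)))) t := by
  have hlin : HasDerivAt (fun z : ℂ => p * (1 - z)) (-p) t := by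
    simpa using ((hasDerivAt_id (t : ℂ)).const_sub 1).const_mul p
  have hexp : HasDerivAt (fun z : ℂ => exp (c * z)) (exp (c * t) * c) t := by
    simpa using ((hasDerivAt_id (t : ℂ)).const_mul c).cexp
  have htrig : HasDerivAt (fun z : ℂ => c * cos (p * (1 - z)) - p * sin (p * (1 - z)))
      (c * (-sin (p * (1 - t)) * -p) - p * (cos (p * (1 - t)) * -p)) t :=
    (hlin.ccos.const_mul c).sub (hlin.csin.const_mul p)
  refine (hexp.mul htrig).comp_ofReal.congr_deriv ?_
  ring

theorem mul_integral_exp_mul_cos_one_sub (c p : ℂ) :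
    (c ^ 2 + p ^ 2) * ∫ t in (0 : ℝ)..2, exp (c * t) * cos (p * (1 - t)) =
      exp (2 * c) * (c * cos p + p * sin p) - (c * cos p - p * sin p) := by
  rw [← intervalIntegral.integral_const_mul,
    intervalIntegral.integral_eq_sub_of_hasDerivAt
      (fun t _ => hasDerivAt_exp_mul_cos_one_sub c p t)
      ((by fun_prop : Continuous _).intervalIntegrable _ _)]
  norm_num [mul_comm c 2]

theorem summable_one_div_pi_sq_mul_sq_sub_sq (p : ℂ) :
    Summable fun k : ℤ => 1 / ((π : ℂ) ^ 2 * k ^ 2 - p ^ 2) := by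
  have hπ : (π : ℂ) ≠ 0 := ofReal_ne_zero.mpr pi_ne_zero
  refine ((EisensteinSeries.summable_linear_sub_mul_linear_add (p / π) 1 1).mul_left
    (-(π : ℂ) ^ (-2 : ℤ))).congr fun k => ?_
  field_simp
  rw [← div_neg]
  ring

theorem pi_sq_mul_sq_sub_sq_ne_zero {p : ℂ} (hp : sin p ≠ 0) (k : ℤ) :
    (π : ℂ) ^ 2 * k ^ 2 - p ^ 2 ≠ 0 := by
  intro h
  rcases sq_eq_sq_iff_eq_or_eq_neg.mp (by linear_combination -h : p ^ 2 = (k * π) ^ 2) with h | h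
  · exact hp (h ▸ sin_int_mul_pi k)
  · exact hp (by rw [h, ← neg_mul, ← Int.cast_neg]; exact sin_int_mul_pi (-k))

instance : Fact (0 < (2 : ℝ)) := ⟨two_pos⟩

theorem cos_mul_one_sub_zero_eq_cos_mul_one_sub_two (p : ℂ) :
    (fun t : ℝ => cos (p * (1 - t))) 0 = (fun t : ℝ => cos (p * (1 - t))) (0 + 2) := by
  norm_num

noncomputable def periodizedCos (p : ℂ) : C(AddCircle (2 : ℝ), ℂ) :=
  ⟨AddCircle.liftIco 2 0 fun t => cos (p * (1 - t)),
    AddCircle.liftIco_continuous (cos_mul_one_sub_zero_eq_cos_mul_one_sub_two p) (by fun_prop)⟩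

theorem periodizedCos_coe (p : ℂ) {x : ℝ} (hx : x ∈ Set.Icc (-2 : ℝ) 2) :
    periodizedCos p x = cos (p - p * |x|) := by
  have hf := cos_mul_one_sub_zero_eq_cos_mul_one_sub_two p
  rw [periodizedCos, ContinuousMap.coe_mk]
  rcases le_or_gt 0 x with h | h
  · rw [AddCircle.liftIco_coe_apply_of_mem_Icc (𝕜 := ℝ) hf ⟨h, by linarith [hx.2]⟩, abs_of_nonneg h]
    ring_nf
  · rw [← AddCircle.coe_add_period,
      AddCircle.liftIco_coe_apply_of_mem_Icc (𝕜 := ℝ) hf ⟨by linarith [hx.1], by linarith⟩,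
      abs_of_neg h, ← Complex.cos_neg]
    push_cast
    ring_nf

theorem fourierCoeff_periodizedCos {p : ℂ} {k : ℤ} (hk : (π : ℂ) ^ 2 * k ^ 2 - p ^ 2 ≠ 0) :
    fourierCoeff (periodizedCos p) k = -(p * sin p) / ((π : ℂ) ^ 2 * k ^ 2 - p ^ 2) := by
  have hint := mul_integral_exp_mul_cos_one_sub (-(π * k * I)) p
  have hexp : exp (2 * -(π * k * I)) = 1 := by
    rw [← exp_int_mul_two_pi_mul_I (-k)]
    push_cast
    ring_nf
  rw [hexp, neg_sq, mul_pow, I_sq] at hint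
  have harg (t : ℝ) : 2 * π * I * ((-k : ℤ) : ℂ) * t / ((2 : ℝ) : ℂ) = -(π * k * I) * t := by
    push_cast
    ring
  rw [periodizedCos, ContinuousMap.coe_mk, fourierCoeff_liftIco_eq, fourierCoeffOn_eq_integral]
  simp only [fourier_coe_apply, smul_eq_mul, zero_add, sub_zero, real_smul]
  simp only [harg]
  rw [eq_div_iff hk]
  push_cast
  linear_combination (-1 / 2 : ℂ) * hint

theorem stmt_3 (p : ℂ) (hp : ¬∃ m : ℤ, p = m * π) (x : ℝ) (hx : x ∈ Set.Icc (-2 : ℝ) 2) :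
    HasSum (fun k : ℤ => Complex.exp (Complex.I * π * k * x) / ((π : ℂ) ^ 2 * k ^ 2 - p ^ 2))
      (-Complex.cos (p - p * |x|) / (p * Complex.sin p)) := by
  have hsin : sin p ≠ 0 := by rwa [Ne, Complex.sin_eq_zero_iff]
  have hp0 : p ≠ 0 := by rintro rfl; simp at hsin
  have hcoeff (k : ℤ) := fourierCoeff_periodizedCos (pi_sq_mul_sq_sub_sq_ne_zero hsin k)
  have hsummable : Summable (fourierCoeff (periodizedCos p)) :=
    ((summable_one_div_pi_sq_mul_sq_sub_sq p).mul_left (-(p * sin p))).congr fun k => by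
      rw [hcoeff, mul_one_div]
  have hsum := has_pointwise_sum_fourier_series_of_summable hsummable (x : AddCircle (2 : ℝ))
  rw [periodizedCos_coe p hx] at hsum
  rw [neg_div, ← div_neg]
  refine (hsum.div_const (-(p * sin p))).congr_fun fun k => ?_
  rw [hcoeff, fourier_coe_apply, smul_eq_mul]
  push_cast
  field_simp
end

section
/- For any real p with p/π not an integer and x ∈ [0, 2], the series ∑_{k=1}^{∞} cos(kπx)/(π²k² - p²) converges and equals -cos(p - px)/(2p·sin(p)) + 1/(2p²). -/
open Real

open Complex in
lemma myInt (p : ℝ) (h1 : ∀ n : ℤ, p + π * n ≠ 0) (n : ℤ) :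
    (∫ x in (0:ℝ)..2, Complex.exp (2 * π * I * (-n) * x / 2) * Complex.cos (p - p * x))
      = 2 * p * Real.sin p / ((p:ℂ)^2 - π^2 * n^2) := by
  have hq1 : ((p:ℂ) + π * n) ≠ 0 := by
    intro h
    apply h1 n
    have := congrArg Complex.re h
    push_cast at this
    simpa using this
  have hq2 : ((p:ℂ) - π * n) ≠ 0 := by
    intro h
    apply h1 (-n)
    have := congrArg Complex.re h
    push_cast at this
    simp at this
    push_cast
    linarith
  have hc1 : (-(I * ((p:ℂ) + π * n))) ≠ 0 := by
    simpa [I_ne_zero] using hq1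
  have hc2 : (I * ((p:ℂ) - π * n)) ≠ 0 := mul_ne_zero I_ne_zero hq2
  have step : ∀ x : ℝ, Complex.exp (2 * π * I * (-n) * x / 2) * Complex.cos (p - p * x)
      = Complex.exp (I * p) / 2 * Complex.exp ((-(I * ((p:ℂ) + π * n))) * x)
        + Complex.exp (-(I * p)) / 2 * Complex.exp ((I * ((p:ℂ) - π * n)) * x) := by
    intro x
    have hA : Complex.exp (2 * π * I * (-n) * x / 2) * Complex.exp (((p:ℂ) - p * x) * I)
        = Complex.exp (I * p) * Complex.exp ((-(I * ((p:ℂ) + π * n))) * x) := by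
      rw [← Complex.exp_add, ← Complex.exp_add]; congr 1; push_cast; ring
    have hB : Complex.exp (2 * π * I * (-n) * x / 2) * Complex.exp (-((p:ℂ) - p * x) * I)
        = Complex.exp (-(I * p)) * Complex.exp ((I * ((p:ℂ) - π * n)) * x) := by
      rw [← Complex.exp_add, ← Complex.exp_add]; congr 1; push_cast; ring
    simp only [Complex.cos]
    calc Complex.exp (2 * π * I * (-n) * x / 2) * ((Complex.exp (((p:ℂ) - p * x) * I) + Complex.exp (-((p:ℂ) - p * x) * I)) / 2)
        = (Complex.exp (2 * π * I * (-n) * x / 2) * Complex.exp (((p:ℂ) - p * x) * I)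
          + Complex.exp (2 * π * I * (-n) * x / 2) * Complex.exp (-((p:ℂ) - p * x) * I)) / 2 := by ring
      _ = _ := by rw [hA, hB]; ring
  rw [intervalIntegral.integral_congr (g := fun x : ℝ => Complex.exp (I * p) / 2 * Complex.exp ((-(I * ((p:ℂ) + π * n))) * x)
        + Complex.exp (-(I * p)) / 2 * Complex.exp ((I * ((p:ℂ) - π * n)) * x)) (fun x _ => step x)]
  rw [intervalIntegral.integral_add
      ((Continuous.intervalIntegrable (by fun_prop) _ _))
      ((Continuous.intervalIntegrable (by fun_prop) _ _))]
  rw [intervalIntegral.integral_const_mul, intervalIntegral.integral_const_mul,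
    integral_exp_mul_complex hc1, integral_exp_mul_complex hc2]
  have e1 : Complex.exp ((-(I * ((p:ℂ) + π * n))) * ((2:ℝ):ℂ)) = Complex.exp (-(I*p)) * Complex.exp (-(I*p)) := by
    rw [show ((-(I * ((p:ℂ) + π * n))) * ((2:ℝ):ℂ)) = (-(I*(p:ℂ)) + -(I*(p:ℂ))) + ((-n : ℤ):ℂ) * (2 * π * I) by push_cast; ring,
      Complex.exp_add, Complex.exp_int_mul_two_pi_mul_I, Complex.exp_add, mul_one]
  have e2 : Complex.exp ((I * ((p:ℂ) - π * n)) * ((2:ℝ):ℂ)) = Complex.exp (I*p) * Complex.exp (I*p) := by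
    rw [show ((I * ((p:ℂ) - π * n)) * ((2:ℝ):ℂ)) = ((I*(p:ℂ)) + (I*(p:ℂ))) + ((-n : ℤ):ℂ) * (2 * π * I) by push_cast; ring,
      Complex.exp_add, Complex.exp_int_mul_two_pi_mul_I, Complex.exp_add, mul_one]
  have hE : Complex.exp (I * p) ≠ 0 := Complex.exp_ne_zero _
  have hsin : (Real.sin p : ℂ) = ((Complex.exp (I*p))⁻¹ - Complex.exp (I*p)) * I / 2 := by
    rw [Complex.ofReal_sin]
    simp only [Complex.sin]
    rw [show (-(p:ℂ) * I) = -(I * p) by ring, show ((p:ℂ) * I) = I * p by ring, Complex.exp_neg]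
  set E := Complex.exp (I * (p:ℂ)) with hEdef
  have hmul : ((p:ℂ) + π * n) * ((p:ℂ) - π * n) ≠ 0 := mul_ne_zero hq1 hq2
  rw [e1, e2, hsin, Complex.exp_neg,
    show ((p:ℂ)^2 - π^2 * n^2) = ((p:ℂ) + π * n) * ((p:ℂ) - π * n) by ring]
  simp only [Complex.ofReal_zero, mul_zero, Complex.exp_zero]
  rw [eq_div_iff hmul]
  have hD : (E ^ 3 * (p:ℂ) ^ 2 * 4 - E ^ 3 * ((π:ℝ):ℂ) ^ 2 * ((n:ℤ):ℂ) ^ 2 * 4) ≠ 0 := by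
    rw [show (E ^ 3 * (p:ℂ) ^ 2 * 4 - E ^ 3 * ((π:ℝ):ℂ) ^ 2 * ((n:ℤ):ℂ) ^ 2 * 4)
        = 4 * E ^ 3 * (((p:ℂ) + π * n) * ((p:ℂ) - π * n)) by ring]
    exact mul_ne_zero (mul_ne_zero (by norm_num : (4:ℂ) ≠ 0) (pow_ne_zero 3 hE)) hmul
  field_simp [hq1, hq2, hE, hD]
  rw [Complex.I_sq, ← hEdef]
  ring

open intervalIntegral in

theorem stmt_4 (p : ℝ) (hp : ¬∃ m : ℤ, p = m * π) (x : ℝ) (hx : x ∈ Set.Icc (0 : ℝ) 2) :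
    HasSum (fun k : ℕ => Real.cos ((k + 1) * π * x) / (π ^ 2 * (k + 1) ^ 2 - p ^ 2))
      (-Real.cos (p - p * x) / (2 * p * Real.sin p) + 1 / (2 * p ^ 2)) := by
  haveI : Fact (0 < (2:ℝ)) := ⟨two_pos⟩
  have hπ : (0:ℝ) < π := Real.pi_pos
  have h1 : ∀ n : ℤ, p + π * n ≠ 0 := by
    intro n h
    exact hp ⟨-n, by push_cast; linarith⟩
  have hp0 : p ≠ 0 := by
    intro h
    exact hp ⟨0, by simp [h]⟩
  have hsinp : Real.sin p ≠ 0 := by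
    rw [Real.sin_ne_zero_iff]
    intro n h
    exact hp ⟨n, h.symm⟩
  have hdenZ : ∀ n : ℤ, p^2 - π^2 * (n:ℝ)^2 ≠ 0 := by
    intro n h
    have h2 : (p - π * n) * (p + π * n) = 0 := by push_cast; nlinarith [h]
    rcases mul_eq_zero.mp h2 with h3 | h3
    · exact h1 (-n) (by push_cast; linarith)
    · exact h1 n h3
  -- the continuous function on the circle
  set g : ℝ → ℂ := fun t => Complex.cos (p - p * t) with hg_def
  have hg02 : g 0 = g 2 := by
    simp only [hg_def]
    norm_num
    rw [show ((p:ℂ) - p * 2) = -(p:ℂ) by ring, Complex.cos_neg]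
  set f : C(AddCircle (2:ℝ), ℂ) :=
    ⟨AddCircle.liftIco 2 0 g, AddCircle.liftIco_zero_continuous hg02 (by fun_prop)⟩ with hf_def
  have hcoeff : ∀ n : ℤ, fourierCoeff (⇑f) n
      = ((p * Real.sin p / (p^2 - π^2 * (n:ℝ)^2) : ℝ) : ℂ) := by
    intro n
    have hfc : (⇑f) = AddCircle.liftIco 2 0 g := rfl
    rw [hfc, fourierCoeff_liftIco_eq, fourierCoeffOn_eq_integral]
    simp only [fourier_coe_apply, smul_eq_mul]
    norm_num
    have hInt : (∫ y in (0:ℝ)..2, Complex.exp (-(2*π*Complex.I*n*y)/2) * g y)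
        = 2*p*Real.sin p/((p:ℂ)^2 - π^2*(n:ℂ)^2) := by
      rw [← myInt p h1 n]
      apply intervalIntegral.integral_congr
      intro y _
      simp only [hg_def]
      congr 2
      push_cast
      ring
    rw [hInt]
    push_cast
    ring
  -- summability
  have hnat : ∀ c : ℝ, Summable (fun n : ℕ => c / (p^2 - π^2 * (n:ℝ)^2)) := by
    intro c
    have hs2 : Summable (fun n : ℕ => (2*|c|/π^2) * (1/(n:ℝ)^2)) :=
      (Real.summable_one_div_nat_pow.mpr one_lt_two).mul_left _
    apply Summable.of_norm_bounded_eventually_nat hs2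
    filter_upwards [Filter.eventually_ge_atTop (⌈|p|⌉₊ + 1)] with n hn
    have hn1 : |p| + 1 ≤ (n:ℝ) := by
      have h2 := Nat.le_ceil |p|
      have h3 : ((⌈|p|⌉₊ + 1 : ℕ) : ℝ) ≤ (n:ℝ) := by exact_mod_cast hn
      push_cast at h3
      linarith
    have hpabs : (0:ℝ) ≤ |p| := abs_nonneg p
    have hπ3 : (3:ℝ) < π := Real.pi_gt_three
    have hn2 : (1:ℝ) ≤ (n:ℝ) := by linarith
    have hsq : p^2 ≤ (n:ℝ)^2 := by nlinarith [_root_.sq_abs p]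
    have hπ2 : (9:ℝ) ≤ π^2 := by nlinarith
    have key : π^2 * (n:ℝ)^2 / 2 ≤ π^2*(n:ℝ)^2 - p^2 := by
      linarith [mul_le_mul_of_nonneg_right hπ2 (sq_nonneg (n:ℝ)), sq_nonneg (n:ℝ), hsq]
    have hpos : (0:ℝ) < π^2*(n:ℝ)^2 - p^2 := by
      have h9 : (0:ℝ) < π^2*(n:ℝ)^2/2 := by positivity
      linarith
    have habs : ‖c / (p^2 - π^2 * (n:ℝ)^2)‖ = |c| / (π^2*(n:ℝ)^2 - p^2) := by
      rw [Real.norm_eq_abs, abs_div, abs_of_neg (by linarith : p^2 - π^2 * (n:ℝ)^2 < 0)]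
      ring_nf
    rw [habs]
    calc |c| / (π^2*(n:ℝ)^2 - p^2) ≤ |c| / (π^2*(n:ℝ)^2/2) :=
          div_le_div_of_nonneg_left (abs_nonneg c) (by positivity) key
      _ = 2*|c|/π^2 * (1/(n:ℝ)^2) := by
          field_simp
  have hsumZ : Summable (fourierCoeff (⇑f)) := by
    rw [show (fourierCoeff (⇑f)) = fun n : ℤ => ((p * Real.sin p / (p^2 - π^2 * (n:ℝ)^2) : ℝ):ℂ)
      from funext hcoeff]
    rw [Complex.summable_ofReal]
    apply Summable.of_nat_of_neg
    · exact (hnat (p * Real.sin p)).congr (fun n => by push_cast; ring_nf)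
    · exact (hnat (p * Real.sin p)).congr (fun n => by push_cast; ring_nf)
  -- evaluate f at x
  have hx2 : f ((x : AddCircle (2:ℝ))) = Complex.cos ((p:ℂ) - p * x) := by
    rcases eq_or_lt_of_le hx.2 with h2 | h2
    · have hcoe : (x : AddCircle (2:ℝ)) = ((0:ℝ) : AddCircle (2:ℝ)) := by
        rw [h2, show (((0:ℝ)) : AddCircle (2:ℝ)) = 0 from rfl]
        exact AddCircle.coe_period (p := (2:ℝ))
      rw [hcoe, show f (((0:ℝ) : AddCircle (2:ℝ))) = AddCircle.liftIco 2 0 g ((0:ℝ): AddCircle (2:ℝ)) from rfl,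
        AddCircle.liftIco_coe_apply (by norm_num : (0:ℝ) ∈ Set.Ico (0:ℝ) (0+2))]
      rw [h2, hg_def]
      norm_num
      rw [show ((p:ℂ) - p * 2) = -(p:ℂ) by ring, Complex.cos_neg]
    · rw [show f ((x : AddCircle (2:ℝ))) = AddCircle.liftIco 2 0 g (x : AddCircle (2:ℝ)) from rfl,
        AddCircle.liftIco_coe_apply ⟨hx.1, by simpa using h2⟩]
  set A : ℤ → ℂ := fun i =>
    ((p * Real.sin p / (p^2 - π^2 * (i:ℝ)^2) : ℝ) : ℂ) * fourier i (x : AddCircle (2:ℝ)) with hA_def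
  set S : ℂ := Complex.cos ((p:ℂ) - p * x) with hS_def
  have HA : HasSum A S := by
    have H := has_pointwise_sum_fourier_series_of_summable hsumZ (x : AddCircle (2:ℝ))
    rw [hx2] at H
    simpa only [hcoeff, smul_eq_mul, hA_def] using H
  have H2 := HA.nat_add_neg
  have H3 : HasSum (fun n : ℕ => A ((n:ℤ)+1) + A (-((n:ℤ)+1))) (S - A 0) := by
    have h4 : HasSum (fun n : ℕ => (fun m : ℕ => A (m:ℤ) + A (-(m:ℤ))) (n+1)) (S - A 0) := by
      apply (hasSum_nat_add_iff (f := fun m : ℕ => A (m:ℤ) + A (-(m:ℤ))) 1).mpr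
      have hv : S - A 0 + ∑ i ∈ Finset.range 1, (A ((i:ℤ)) + A (-((i:ℤ)))) = S + A 0 := by
        rw [Finset.sum_range_one]
        simp only [Nat.cast_zero, neg_zero]
        ring
      rw [hv]
      exact H2
    simp only [] at h4
    push_cast at h4
    exact h4
  -- rewrite the terms
  have hpair : ∀ θ:ℝ, Complex.exp ((θ:ℂ)*Complex.I) + Complex.exp (-(θ:ℂ)*Complex.I)
      = 2 * Complex.cos (θ:ℂ) := by
    intro θ
    simp only [Complex.cos]
    ring
  have hterm : ∀ n : ℕ, A ((n:ℤ)+1) + A (-((n:ℤ)+1))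
      = ((-(2*p*Real.sin p) * (Real.cos (((n:ℝ) + 1) * π * x) / (π ^ 2 * ((n:ℝ) + 1) ^ 2 - p ^ 2)) : ℝ) : ℂ) := by
    intro n
    have hdenN : p^2 - π^2*((n:ℝ)+1)^2 ≠ 0 := by
      have := hdenZ ((n:ℤ)+1)
      push_cast at this
      exact this
    have f1 : fourier ((n:ℤ)+1) (x : AddCircle (2:ℝ))
        = Complex.exp (((((n:ℝ)+1)*π*x : ℝ):ℂ)*Complex.I) := by
      rw [fourier_coe_apply]
      congr 1
      push_cast
      ring
    have f2 : fourier (-((n:ℤ)+1)) (x : AddCircle (2:ℝ))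
        = Complex.exp (-((((n:ℝ)+1)*π*x : ℝ):ℂ)*Complex.I) := by
      rw [fourier_coe_apply]
      congr 1
      push_cast
      ring
    simp only [hA_def]
    rw [f1, f2]
    rw [show ((-((n:ℤ) + 1) : ℤ) : ℝ) = -((n:ℝ)+1) from by push_cast; ring,
      show (((n:ℤ) + 1 : ℤ) : ℝ) = ((n:ℝ)+1) from by push_cast; ring,
      show (-((n:ℝ)+1))^2 = ((n:ℝ)+1)^2 from by ring,
      ← mul_add, hpair, ← Complex.ofReal_cos]
    norm_cast
    push_cast
    rw [show π^2*((n:ℝ)+1)^2 - p^2 = -(p^2 - π^2*((n:ℝ)+1)^2) from by ring, div_neg]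
    ring
  have hval : S - A 0 = ((Real.cos (p - p*x) - p * Real.sin p/p^2 : ℝ) : ℂ) := by
    have hA0 : A 0 = ((p * Real.sin p/p^2 : ℝ) : ℂ) := by
      simp only [hA_def, fourier_zero, mul_one]
      norm_num
    have hS : S = ((Real.cos (p - p*x) : ℝ) : ℂ) := by
      rw [hS_def, show ((p:ℂ) - ↑p*↑x) = ((p - p*x : ℝ):ℂ) from by push_cast; ring,
        ← Complex.ofReal_cos]
    rw [hA0, hS]
    push_cast
    ring
  rw [funext hterm, hval] at H3
  have H4 : HasSum (fun n : ℕ => -(2*p*Real.sin p) * (Real.cos (((n:ℝ) + 1) * π * x) / (π ^ 2 * ((n:ℝ) + 1) ^ 2 - p ^ 2)))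
      (Real.cos (p - p*x) - p * Real.sin p/p^2) := by
    rwa [Complex.hasSum_ofReal] at H3
  have hc0 : -(2*p*Real.sin p) ≠ 0 := by
    simp only [neg_ne_zero]
    exact mul_ne_zero (mul_ne_zero two_ne_zero hp0) hsinp
  have hW : (Real.cos (p - p*x) - p * Real.sin p/p^2)
      = -(2*p*Real.sin p) * (-Real.cos (p - p * x) / (2 * p * Real.sin p) + 1 / (2 * p ^ 2)) := by
    field_simp
    ring
  rw [hW] at H4
  exact (hasSum_mul_left_iff hc0).mp H4
end

section
/- The function w(x,t) = c + (15/19)(√11/√(19ν))[11·tanh³(q(x - ct - x₀)/√ν) - 9·tanh(q(x - ct - x₀)/√ν)], with q = √(11/76), satisfies the Kuramoto–Sivashinsky equation w_t + w·w_x + w_xx + ν·w_xxxx = 0 for all x, t ∈ ℝ. -/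
open Real

private lemma tanh_hasDerivAt (x : ℝ) :
    HasDerivAt Real.tanh (1 - Real.tanh x ^ 2) x := by
  have hc : Real.cosh x ≠ 0 := ne_of_gt (Real.cosh_pos x)
  have h := (Real.hasDerivAt_sinh x).div (Real.hasDerivAt_cosh x) hc
  have heq : (Real.cosh x * Real.cosh x - Real.sinh x * Real.sinh x) / Real.cosh x ^ 2
      = 1 - Real.tanh x ^ 2 := by
    rw [Real.tanh_eq_sinh_div_cosh]
    have h1 := Real.cosh_sq_sub_sinh_sq x
    field_simp
  rw [heq] at h
  exact h.congr_of_eventuallyEq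
    (Filter.Eventually.of_forall fun y => (Real.tanh_eq_sinh_div_cosh y))

private lemma tanh_comp {u : ℝ → ℝ} {m y : ℝ} (hu : HasDerivAt u m y) :
    HasDerivAt (fun s => Real.tanh (u s)) ((1 - Real.tanh (u y) ^ 2) * m) y :=
  (tanh_hasDerivAt (u y)).comp y hu

private lemma dKS1 (K c : ℝ) {u : ℝ → ℝ} {m y : ℝ} (hu : HasDerivAt u m y) :
    HasDerivAt (fun s => c + K * (11 * Real.tanh (u s) ^ 3 - 9 * Real.tanh (u s)))
      (K * m * (33 * Real.tanh (u y) ^ 2 - 9) * (1 - Real.tanh (u y) ^ 2)) y := by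
  have h := tanh_comp hu
  have h2 := ((((h.pow 3).const_mul 11).sub (h.const_mul 9)).const_mul K).const_add c
  refine h2.congr_deriv ?_
  ring

private lemma dKS2 (K a : ℝ) {u : ℝ → ℝ} {m y : ℝ} (hu : HasDerivAt u m y) :
    HasDerivAt (fun s => K * a * (33 * Real.tanh (u s) ^ 2 - 9) * (1 - Real.tanh (u s) ^ 2))
      (K * a * m * Real.tanh (u y) * (1 - Real.tanh (u y) ^ 2)
        * (84 - 132 * Real.tanh (u y) ^ 2)) y := by
  have h := tanh_comp hu
  have h2 := ((((h.pow 2).const_mul 33).sub_const 9).mul ((h.pow 2).const_sub 1)).const_mul (K * a)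
  have hfun : (fun s => K * a * (33 * Real.tanh (u s) ^ 2 - 9) * (1 - Real.tanh (u s) ^ 2))
      = fun s => K * a * ((33 * Real.tanh (u s) ^ 2 - 9) * (1 - Real.tanh (u s) ^ 2)) := by
    funext s; ring
  rw [hfun]
  refine h2.congr_deriv ?_
  push_cast [Pi.pow_apply]; ring

private lemma dKS3 (K a : ℝ) {u : ℝ → ℝ} {m y : ℝ} (hu : HasDerivAt u m y) :
    HasDerivAt (fun s => K * a * m * Real.tanh (u s) * (1 - Real.tanh (u s) ^ 2)
        * (84 - 132 * Real.tanh (u s) ^ 2))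
      (K * a * m * m * (1 - Real.tanh (u y) ^ 2)
        * (84 - 648 * Real.tanh (u y) ^ 2 + 660 * Real.tanh (u y) ^ 4)) y := by
  have h := tanh_comp hu
  have h2 := ((((h.const_mul 84).sub ((h.pow 3).const_mul 216)).add
    ((h.pow 5).const_mul 132)).const_mul (K * a * m))
  have hfun : (fun s => K * a * m * Real.tanh (u s) * (1 - Real.tanh (u s) ^ 2)
        * (84 - 132 * Real.tanh (u s) ^ 2))
      = fun s => K * a * m * (84 * Real.tanh (u s) - 216 * Real.tanh (u s) ^ 3
        + 132 * Real.tanh (u s) ^ 5) := by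
    funext s; ring
  rw [hfun]
  refine h2.congr_deriv ?_
  push_cast; ring

private lemma dKS4 (K a : ℝ) {u : ℝ → ℝ} {m y : ℝ} (hu : HasDerivAt u m y) :
    HasDerivAt (fun s => K * a * m * m * (1 - Real.tanh (u s) ^ 2)
        * (84 - 648 * Real.tanh (u s) ^ 2 + 660 * Real.tanh (u s) ^ 4))
      (K * a * m * m * m * (1 - Real.tanh (u y) ^ 2)
        * (-1464 * Real.tanh (u y) + 5232 * Real.tanh (u y) ^ 3
          - 3960 * Real.tanh (u y) ^ 5)) y := by
  have h := tanh_comp hu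
  have h2 := (((((h.pow 2).const_mul 732).neg.add ((h.pow 4).const_mul 1308)).sub
    ((h.pow 6).const_mul 660)).const_mul (K * a * m * m)).const_add (K * a * m * m * 84)
  have hfun : (fun s => K * a * m * m * (1 - Real.tanh (u s) ^ 2)
        * (84 - 648 * Real.tanh (u s) ^ 2 + 660 * Real.tanh (u s) ^ 4))
      = fun s => K * a * m * m * 84 + K * a * m * m * (-(732 * Real.tanh (u s) ^ 2)
        + 1308 * Real.tanh (u s) ^ 4 - 660 * Real.tanh (u s) ^ 6) := by
    funext s; ring
  rw [hfun]
  refine h2.congr_deriv ?_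
  push_cast; ring

theorem stmt_7 (ν c x₀ : ℝ) (hν : 0 < ν) (q : ℝ) (hq : q = Real.sqrt (11 / 76))
    (w : ℝ → ℝ → ℝ)
    (hw : w = fun x t => c + (15 / 19) * (Real.sqrt 11 / Real.sqrt (19 * ν)) *
      (11 * Real.tanh (q * (x - c * t - x₀) / Real.sqrt ν) ^ 3
        - 9 * Real.tanh (q * (x - c * t - x₀) / Real.sqrt ν))) :
    ∀ x t : ℝ,
      deriv (fun s => w x s) t + w x t * deriv (fun y => w y t) x
        + iteratedDeriv 2 (fun y => w y t) x + ν * iteratedDeriv 4 (fun y => w y t) x = 0 := by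
  intro x t
  subst hw
  have hsν : (0:ℝ) < Real.sqrt ν := Real.sqrt_pos.mpr hν
  set K : ℝ := (15 / 19) * (Real.sqrt 11 / Real.sqrt (19 * ν)) with hK
  set a : ℝ := q / Real.sqrt ν with ha
  have hνa2 : ν * a ^ 2 = 11 / 76 := by
    rw [ha, hq, div_pow, Real.sq_sqrt (by norm_num : (0:ℝ) ≤ 11/76),
      Real.sq_sqrt hν.le]
    field_simp
  have h76 : Real.sqrt 76 = 2 * Real.sqrt 19 := by
    rw [show (76:ℝ) = 4 * 19 by norm_num, Real.sqrt_mul (by norm_num : (0:ℝ) ≤ 4),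
      show Real.sqrt 4 = 2 by
        rw [show (4:ℝ) = 2 ^ 2 by norm_num, Real.sqrt_sq (by norm_num : (0:ℝ) ≤ 2)]]
  have h19 : (0:ℝ) < Real.sqrt 19 := Real.sqrt_pos.mpr (by norm_num)
  have hKa : K = (30 / 19) * a := by
    rw [hK, ha, hq, Real.sqrt_mul (by norm_num : (0:ℝ) ≤ 19),
      Real.sqrt_div (by norm_num : (0:ℝ) ≤ 11) 76, h76]
    field_simp
    ring
  -- derivative of the x-argument
  have hu : ∀ y : ℝ, HasDerivAt (fun z => q * (z - c * t - x₀) / Real.sqrt ν) a y := by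
    intro y
    have h1 : HasDerivAt (fun z : ℝ => z - c * t - x₀) 1 y :=
      ((hasDerivAt_id y).sub_const (c * t)).sub_const x₀
    have h2 := (h1.const_mul q).div_const (Real.sqrt ν)
    refine h2.congr_deriv ?_
    rw [ha]; ring
  -- derivative of the t-argument
  have hv : HasDerivAt (fun s => q * (x - c * s - x₀) / Real.sqrt ν) (-(c * a)) t := by
    have h1 : HasDerivAt (fun s : ℝ => x - c * s - x₀) (-(c * 1)) t :=
      (((hasDerivAt_id t).const_mul c).const_sub x).sub_const x₀
    have h2 := (h1.const_mul q).div_const (Real.sqrt ν)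
    refine h2.congr_deriv ?_
    rw [ha]; ring
  set T : ℝ := Real.tanh (q * (x - c * t - x₀) / Real.sqrt ν) with hT
  -- first spatial derivative
  have h1 : ∀ y : ℝ, HasDerivAt
      (fun y => c + K * (11 * Real.tanh (q * (y - c * t - x₀) / Real.sqrt ν) ^ 3
        - 9 * Real.tanh (q * (y - c * t - x₀) / Real.sqrt ν)))
      (K * a * (33 * Real.tanh (q * (y - c * t - x₀) / Real.sqrt ν) ^ 2 - 9)
        * (1 - Real.tanh (q * (y - c * t - x₀) / Real.sqrt ν) ^ 2)) y :=
    fun y => dKS1 K c (hu y)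
  have hd1 : deriv (fun y => c + K * (11 * Real.tanh (q * (y - c * t - x₀) / Real.sqrt ν) ^ 3
        - 9 * Real.tanh (q * (y - c * t - x₀) / Real.sqrt ν)))
      = fun y => K * a * (33 * Real.tanh (q * (y - c * t - x₀) / Real.sqrt ν) ^ 2 - 9)
        * (1 - Real.tanh (q * (y - c * t - x₀) / Real.sqrt ν) ^ 2) :=
    funext fun y => (h1 y).deriv
  have h2 : ∀ y : ℝ, HasDerivAt
      (fun y => K * a * (33 * Real.tanh (q * (y - c * t - x₀) / Real.sqrt ν) ^ 2 - 9)
        * (1 - Real.tanh (q * (y - c * t - x₀) / Real.sqrt ν) ^ 2))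
      (K * a * a * Real.tanh (q * (y - c * t - x₀) / Real.sqrt ν)
        * (1 - Real.tanh (q * (y - c * t - x₀) / Real.sqrt ν) ^ 2)
        * (84 - 132 * Real.tanh (q * (y - c * t - x₀) / Real.sqrt ν) ^ 2)) y :=
    fun y => dKS2 K a (hu y)
  have hd2 : deriv (fun y => K * a * (33 * Real.tanh (q * (y - c * t - x₀) / Real.sqrt ν) ^ 2 - 9)
        * (1 - Real.tanh (q * (y - c * t - x₀) / Real.sqrt ν) ^ 2))
      = fun y => K * a * a * Real.tanh (q * (y - c * t - x₀) / Real.sqrt ν)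
        * (1 - Real.tanh (q * (y - c * t - x₀) / Real.sqrt ν) ^ 2)
        * (84 - 132 * Real.tanh (q * (y - c * t - x₀) / Real.sqrt ν) ^ 2) :=
    funext fun y => (h2 y).deriv
  have h3 : ∀ y : ℝ, HasDerivAt
      (fun y => K * a * a * Real.tanh (q * (y - c * t - x₀) / Real.sqrt ν)
        * (1 - Real.tanh (q * (y - c * t - x₀) / Real.sqrt ν) ^ 2)
        * (84 - 132 * Real.tanh (q * (y - c * t - x₀) / Real.sqrt ν) ^ 2))
      (K * a * a * a * (1 - Real.tanh (q * (y - c * t - x₀) / Real.sqrt ν) ^ 2)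
        * (84 - 648 * Real.tanh (q * (y - c * t - x₀) / Real.sqrt ν) ^ 2
          + 660 * Real.tanh (q * (y - c * t - x₀) / Real.sqrt ν) ^ 4)) y :=
    fun y => dKS3 K a (hu y)
  have hd3 : deriv (fun y => K * a * a * Real.tanh (q * (y - c * t - x₀) / Real.sqrt ν)
        * (1 - Real.tanh (q * (y - c * t - x₀) / Real.sqrt ν) ^ 2)
        * (84 - 132 * Real.tanh (q * (y - c * t - x₀) / Real.sqrt ν) ^ 2))
      = fun y => K * a * a * a * (1 - Real.tanh (q * (y - c * t - x₀) / Real.sqrt ν) ^ 2)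
        * (84 - 648 * Real.tanh (q * (y - c * t - x₀) / Real.sqrt ν) ^ 2
          + 660 * Real.tanh (q * (y - c * t - x₀) / Real.sqrt ν) ^ 4) :=
    funext fun y => (h3 y).deriv
  have h4 : ∀ y : ℝ, HasDerivAt
      (fun y => K * a * a * a * (1 - Real.tanh (q * (y - c * t - x₀) / Real.sqrt ν) ^ 2)
        * (84 - 648 * Real.tanh (q * (y - c * t - x₀) / Real.sqrt ν) ^ 2
          + 660 * Real.tanh (q * (y - c * t - x₀) / Real.sqrt ν) ^ 4))
      (K * a * a * a * a * (1 - Real.tanh (q * (y - c * t - x₀) / Real.sqrt ν) ^ 2)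
        * (-1464 * Real.tanh (q * (y - c * t - x₀) / Real.sqrt ν)
          + 5232 * Real.tanh (q * (y - c * t - x₀) / Real.sqrt ν) ^ 3
          - 3960 * Real.tanh (q * (y - c * t - x₀) / Real.sqrt ν) ^ 5)) y :=
    fun y => dKS4 K a (hu y)
  have hd4 : deriv (fun y => K * a * a * a * (1 - Real.tanh (q * (y - c * t - x₀) / Real.sqrt ν) ^ 2)
        * (84 - 648 * Real.tanh (q * (y - c * t - x₀) / Real.sqrt ν) ^ 2
          + 660 * Real.tanh (q * (y - c * t - x₀) / Real.sqrt ν) ^ 4))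
      = fun y => K * a * a * a * a * (1 - Real.tanh (q * (y - c * t - x₀) / Real.sqrt ν) ^ 2)
        * (-1464 * Real.tanh (q * (y - c * t - x₀) / Real.sqrt ν)
          + 5232 * Real.tanh (q * (y - c * t - x₀) / Real.sqrt ν) ^ 3
          - 3960 * Real.tanh (q * (y - c * t - x₀) / Real.sqrt ν) ^ 5) :=
    funext fun y => (h4 y).deriv
  -- time derivative
  have hdt : deriv (fun s => c + K * (11 * Real.tanh (q * (x - c * s - x₀) / Real.sqrt ν) ^ 3
        - 9 * Real.tanh (q * (x - c * s - x₀) / Real.sqrt ν))) t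
      = K * (-(c * a)) * (33 * T ^ 2 - 9) * (1 - T ^ 2) :=
    (dKS1 K c hv).deriv
  show deriv (fun s => c + K * (11 * Real.tanh (q * (x - c * s - x₀) / Real.sqrt ν) ^ 3
        - 9 * Real.tanh (q * (x - c * s - x₀) / Real.sqrt ν))) t
      + (c + K * (11 * T ^ 3 - 9 * T))
        * deriv (fun y => c + K * (11 * Real.tanh (q * (y - c * t - x₀) / Real.sqrt ν) ^ 3
            - 9 * Real.tanh (q * (y - c * t - x₀) / Real.sqrt ν))) x
      + iteratedDeriv 2 (fun y => c + K * (11 * Real.tanh (q * (y - c * t - x₀) / Real.sqrt ν) ^ 3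
            - 9 * Real.tanh (q * (y - c * t - x₀) / Real.sqrt ν))) x
      + ν * iteratedDeriv 4 (fun y => c + K * (11 * Real.tanh (q * (y - c * t - x₀) / Real.sqrt ν) ^ 3
            - 9 * Real.tanh (q * (y - c * t - x₀) / Real.sqrt ν))) x = 0
  have e2 : ∀ f : ℝ → ℝ, iteratedDeriv 2 f = deriv (deriv f) := fun f => by
    rw [show (2:ℕ) = 1 + 1 from rfl, iteratedDeriv_succ, iteratedDeriv_one]
  have e4 : ∀ f : ℝ → ℝ, iteratedDeriv 4 f = deriv (deriv (deriv (deriv f))) := fun f => by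
    rw [show (4:ℕ) = 1 + 1 + 1 + 1 from rfl, iteratedDeriv_succ, iteratedDeriv_succ,
      iteratedDeriv_succ, iteratedDeriv_one]
  rw [e2, e4, hd1, hd2, hd3, hd4, hdt]
  rw [hKa]
  linear_combination ((30:ℝ)/19 * a^3 * (1 - T^2)
    * (-1464*T + 5232*T^3 - 3960*T^5)) * hνa2
end

section
/- For a real polynomial p of degree at most n, Lagrange interpolation at the Chebyshev points of the second kind xⱼ = cos(jπ/n), j = 0,…,n, can be written in barycentric form: for x not equal to any xⱼ, p(x) = [∑_{j=0}^n (wⱼ/(x - xⱼ)) p(xⱼ)] / [∑_{j=0}^n wⱼ/(x - xⱼ)], where w₀ = 1/2, wₙ = (-1)ⁿ/2, and wⱼ = (-1)ʲ for 0 < j < n. -/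
/-!
Writing `xⱼ = cos θⱼ` with `n θⱼ = jπ`, the identity `T_{n±1}(cos θ) = cos((n ± 1)θ)` shows that
every `xⱼ` is a root of `T_{n+1} - T_{n-1}`, whose leading coefficient is `2ⁿ`; hence the nodal
polynomial `ℓ(x) = ∏ⱼ (x - xⱼ)` equals `2⁻ⁿ (T_{n+1} - T_{n-1})`. Its derivative is
`2⁻ⁿ ((n + 1) U_n - (n - 1) U_{n-2})`, and `U_m(cos θ) sin θ = sin((m + 1)θ)` (or `U_m(±1)`
at the endpoints) gives `ℓ'(xⱼ) wⱼ = 2n / 2ⁿ`. So the `wⱼ` are a constant multiple of the classical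
barycentric weights `1 / ℓ'(xⱼ)`, and the second barycentric formula does not see that constant.
-/

open Real Finset

namespace Lagrange

variable {F ι : Type*} [Field F] [DecidableEq ι] {s : Finset ι} {v : ι → F}

open Polynomial in
theorem eval_eq_barycentric_of_eq_mul_nodalWeight (hvs : Set.InjOn v s) {p : F[X]}
    (hp : p.degree < #s) {w : ι → F} {c : F} (hc : c ≠ 0)
    (hw : ∀ i ∈ s, w i = c * nodalWeight s v i) {x : F} (hx : ∀ i ∈ s, x ≠ v i) :
    p.eval x = (∑ i ∈ s, w i / (x - v i) * p.eval (v i)) / ∑ i ∈ s, w i / (x - v i) := by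
  rcases s.eq_empty_or_nonempty with rfl | hs
  · obtain rfl : p = 0 := by simpa using hp
    simp
  have hterm : ∀ i ∈ s, w i / (x - v i) = c * (nodalWeight s v i * (x - v i)⁻¹) := fun i hi => by
    rw [hw i hi, div_eq_mul_inv, mul_assoc]
  calc p.eval x = (interpolate s v fun i => p.eval (v i)).eval x := by
        rw [← eq_interpolate hvs hp]
    _ = (∑ i ∈ s, nodalWeight s v i * (x - v i)⁻¹ * p.eval (v i)) /
          ∑ i ∈ s, nodalWeight s v i * (x - v i)⁻¹ :=
        eval_interpolate_not_at_node' _ hvs hs hx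
    _ = (c * ∑ i ∈ s, nodalWeight s v i * (x - v i)⁻¹ * p.eval (v i)) /
          (c * ∑ i ∈ s, nodalWeight s v i * (x - v i)⁻¹) := (mul_div_mul_left _ _ hc).symm
    _ = _ := by
        rw [mul_sum, mul_sum]
        congr 1 <;> refine sum_congr rfl fun i hi => ?_
        · rw [hterm i hi]
          ring
        · rw [hterm i hi]

end Lagrange

namespace Polynomial.Chebyshev

lemma eval_T_add_one_sub_T_sub_one_node {n : ℕ} (hn : n ≠ 0) (j : ℕ) :
    (T ℝ (n + 1) - T ℝ (n - 1)).eval (node n j) = 0 := by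
  have hθ : (n : ℝ) * (j * π / n) = j * π := by field_simp
  rw [eval_sub, node, T_real_cos, T_real_cos]
  push_cast
  rw [add_mul, sub_mul, hθ, one_mul, cos_add, cos_sub, sin_nat_mul_pi]
  ring

lemma degree_T_sub_one_lt_degree_T_add_one {n : ℕ} (hn : n ≠ 0) :
    (T ℝ (n - 1)).degree < (T ℝ (n + 1)).degree := by
  rw [degree_T, degree_T]
  exact_mod_cast (by omega : (n - 1 : ℤ).natAbs < (n + 1 : ℤ).natAbs)

lemma T_add_one_sub_T_sub_one_eq_nodal {n : ℕ} (hn : n ≠ 0) :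
    T ℝ (n + 1) - T ℝ (n - 1) =
      Polynomial.C (2 ^ n) * Lagrange.nodal (range (n + 1)) (node n) := by
  have hlt := degree_T_sub_one_lt_degree_T_add_one hn
  have hdeg : (T ℝ (n + 1) - T ℝ (n - 1)).degree = n + 1 := by
    rw [degree_sub_eq_left_of_degree_lt hlt, degree_T]
    norm_cast
  refine eq_of_degree_sub_lt_of_eval_index_eq _ (strictAntiOn_node n).injOn ?_ fun j hj => ?_
  · rw [card_range]
    refine (degree_sub_lt_left ?_ ?_ ?_).trans_le hdeg.le
    · rw [hdeg, degree_C_mul (by positivity), Lagrange.degree_nodal, card_range]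
      norm_cast
    · rw [← degree_ne_bot, hdeg]
      exact WithBot.natCast_ne_bot _
    · rw [leadingCoeff_sub_of_degree_lt hlt, leadingCoeff_T, leadingCoeff_mul, leadingCoeff_C,
        Lagrange.nodal_monic.leadingCoeff, mul_one]
      congr 1
  · rw [eval_T_add_one_sub_T_sub_one_node hn, eval_mul, Lagrange.eval_nodal_at_node hj, mul_zero]

noncomputable def nodeWeight (n j : ℕ) : ℝ :=
  if j = 0 then 1 / 2 else if j = n then (-1) ^ n / 2 else (-1) ^ j

lemma derivative_T_add_one_sub_T_sub_one (n : ℤ) :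
    derivative (T ℝ (n + 1) - T ℝ (n - 1)) =
      ((n + 1 : ℤ) : ℝ[X]) * U ℝ n - ((n - 1 : ℤ) : ℝ[X]) * U ℝ (n - 2) := by
  rw [derivative_sub, T_derivative_eq_U, T_derivative_eq_U, add_sub_cancel_right, sub_sub,
    one_add_one_eq_two]

lemma eval_U_add_node_mul_sin {n : ℕ} (hn : n ≠ 0) (j : ℕ) (m : ℤ) :
    (U ℝ (n + m)).eval (node n j) * sin (j * π / n) = (-1) ^ j * sin ((m + 1) * (j * π / n)) := by
  have hθ : (n : ℝ) * (j * π / n) = j * π := by field_simp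
  rw [node, U_real_cos]
  push_cast
  rw [add_assoc, add_mul, hθ, sin_add, sin_nat_mul_pi, cos_nat_mul_pi]
  ring

lemma sin_node_angle_ne_zero {n j : ℕ} (hj0 : j ≠ 0) (hjn : j < n) : sin (j * π / n) ≠ 0 := by
  have hj0' : (0 : ℝ) < j := by exact_mod_cast Nat.pos_of_ne_zero hj0
  have hjn' : (j : ℝ) < n := by exact_mod_cast hjn
  have hn' : (0 : ℝ) < n := hj0'.trans hjn'
  refine (sin_pos_of_pos_of_lt_pi (by positivity) ?_).ne'
  rw [div_lt_iff₀ hn']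
  nlinarith [pi_pos]

lemma eval_derivative_T_add_one_sub_T_sub_one_node_mul_nodeWeight {n : ℕ} (hn : n ≠ 0) {j : ℕ}
    (hj : j ≤ n) :
    (derivative (T ℝ (n + 1) - T ℝ (n - 1))).eval (node n j) * nodeWeight n j = 2 * n := by
  have hsq : ((-1 : ℝ) ^ j) ^ 2 = 1 := by simp [← pow_mul]
  rw [derivative_T_add_one_sub_T_sub_one]
  simp only [eval_sub, eval_mul, eval_intCast]
  rcases eq_or_ne j 0 with rfl | hj0
  · rw [node_eq_one, U_eval_one, U_eval_one, nodeWeight, if_pos rfl]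
    push_cast
    ring
  rcases eq_or_ne j n with rfl | hjn
  · have hsign : ((j : ℤ) - 2).negOnePow = (j : ℤ).negOnePow := by
      rw [Int.negOnePow_sub, Int.negOnePow_even 2 even_two, mul_one]
    rw [node_eq_neg_one hn, U_eval_neg_one, U_eval_neg_one, hsign, Int.cast_negOnePow_natCast,
      nodeWeight, if_neg hj0, if_pos rfl]
    push_cast
    linear_combination (2 * j : ℝ) * hsq
  · have hU : (U ℝ n).eval (node n j) * sin (j * π / n) = (-1) ^ j * sin (j * π / n) := by
      simpa using eval_U_add_node_mul_sin hn j 0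
    have hU' :
        (U ℝ (n - 2)).eval (node n j) * sin (j * π / n) = -((-1) ^ j * sin (j * π / n)) := by
      have h := eval_U_add_node_mul_sin hn j (-2)
      norm_num at h
      rwa [← sub_eq_add_neg] at h
    rw [nodeWeight, if_neg hj0, if_neg hjn]
    apply mul_right_cancel₀ (sin_node_angle_ne_zero hj0 (hj.lt_of_ne hjn))
    push_cast
    linear_combination ((n + 1) * (-1) ^ j : ℝ) * hU - ((n - 1) * (-1) ^ j : ℝ) * hU'
      + (2 * n * sin (j * π / n)) * hsq

lemma nodeWeight_eq_mul_nodalWeight {n : ℕ} (hn : n ≠ 0) {j : ℕ} (hj : j ≤ n) :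
    nodeWeight n j = 2 * n / 2 ^ n * Lagrange.nodalWeight (range (n + 1)) (node n) j := by
  have hD := eval_derivative_T_add_one_sub_T_sub_one_node_mul_nodeWeight hn hj
  rw [T_add_one_sub_T_sub_one_eq_nodal hn, derivative_C_mul, eval_C_mul] at hD
  have hjs : j ∈ range (n + 1) := mem_range_succ_iff.2 hj
  rw [Lagrange.nodalWeight_eq_eval_derivative_nodal hjs]
  have hD0 : (derivative (Lagrange.nodal (range (n + 1)) (node n))).eval (node n j) ≠ 0 := by
    rintro h
    simp [h, hn] at hD
  field_simp
  linear_combination hD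

end Polynomial.Chebyshev

theorem stmt_12 (n : ℕ) (hn : 1 ≤ n) (p : Polynomial ℝ) (hdeg : p.natDegree ≤ n)
    (X : ℕ → ℝ) (hX : ∀ j, X j = Real.cos (j * π / n))
    (w : ℕ → ℝ)
    (hw : ∀ j ≤ n, w j = if j = 0 then 1/2 else if j = n then (-1 : ℝ) ^ n / 2 else (-1 : ℝ) ^ j)
    (x : ℝ) (hx : ∀ j ≤ n, x ≠ X j) :
    p.eval x = (∑ j ∈ Finset.range (n + 1), w j / (x - X j) * p.eval (X j))
      / (∑ j ∈ Finset.range (n + 1), w j / (x - X j)) := by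
  obtain rfl : X = Polynomial.Chebyshev.node n := funext hX
  have hn0 : n ≠ 0 := Nat.one_le_iff_ne_zero.1 hn
  refine Lagrange.eval_eq_barycentric_of_eq_mul_nodalWeight
    (Polynomial.Chebyshev.strictAntiOn_node n).injOn ?_ (c := 2 * n / 2 ^ n) (by positivity)
    (fun j hj => (hw j (mem_range_succ_iff.1 hj)).trans
      (Polynomial.Chebyshev.nodeWeight_eq_mul_nodalWeight hn0 (mem_range_succ_iff.1 hj)))
    fun j hj => hx j (mem_range_succ_iff.1 hj)
  rw [card_range]
  exact (Polynomial.degree_le_of_natDegree_le hdeg).trans_lt (by exact_mod_cast n.lt_succ_self)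
end

section
/- Let G(x,y) be defined for 0 ≤ y ≤ x ≤ 1 (one smooth piece) by the closed form G(x,y) = Q[e^{-b(x-y)}sin(2a - a(x-y) - φ) - e^{-4b + b(x-y)}sin(2a - a(x-y) + φ) - e^{-2b + b(x+y)}sin(a(x+y) - φ) + e^{-2b - b(x+y)}sin(a(x+y) + φ)]. Then G(1, y) = 0 for all y ∈ [0,1]. -/
open Real

/- At `x = 1` the arguments satisfy `x - y = 2 - (x + y)`, and under `s ↦ 2 - s` the two terms
in `x - y` turn exactly into the two terms in `x + y`; so they cancel in `G(1, y)`. -/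

theorem exp_mul_sin_reflect (a b φ t : ℝ) :
    exp (-b * (2 - t)) * sin (2 * a - a * (2 - t) - φ)
        - exp (-4 * b + b * (2 - t)) * sin (2 * a - a * (2 - t) + φ)
      = exp (-2 * b + b * t) * sin (a * t - φ) - exp (-2 * b - b * t) * sin (a * t + φ) := by
  ring_nf

theorem stmt_17_general (a b φ Q : ℝ)
    (G : ℝ → ℝ → ℝ)
    (hG : G = fun x y => Q * (Real.exp (-b * (x - y)) * Real.sin (2 * a - a * (x - y) - φ)
      - Real.exp (-4 * b + b * (x - y)) * Real.sin (2 * a - a * (x - y) + φ)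
      - Real.exp (-2 * b + b * (x + y)) * Real.sin (a * (x + y) - φ)
      + Real.exp (-2 * b - b * (x + y)) * Real.sin (a * (x + y) + φ))) :
    ∀ y ∈ Set.Icc (0 : ℝ) 1, G 1 y = 0 := by
  intro y _
  have h_reflect : (1 : ℝ) - y = 2 - (1 + y) := by ring
  have := exp_mul_sin_reflect a b φ (1 + y)
  rw [← h_reflect] at this
  rw [hG]
  linear_combination Q * this

theorem stmt_17 (a b φ θ Q : ℝ) (ha : 0 < a) (hb : 0 < b) (hQ : Q ≠ 0)
    (hθ : θ = Real.arctan (b / a))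
    (hφ : φ = 2 * a - θ - π / 2 + Real.arctan (Real.sin (4 * a) / (Real.exp (4 * b) - Real.cos (4 * a))))
    (G : ℝ → ℝ → ℝ)
    (hG : G = fun x y => Q * (Real.exp (-b * (x - y)) * Real.sin (2 * a - a * (x - y) - φ)
      - Real.exp (-4 * b + b * (x - y)) * Real.sin (2 * a - a * (x - y) + φ)
      - Real.exp (-2 * b + b * (x + y)) * Real.sin (a * (x + y) - φ)
      + Real.exp (-2 * b - b * (x + y)) * Real.sin (a * (x + y) + φ))) :
    ∀ y ∈ Set.Icc (0 : ℝ) 1, G 1 y = 0 :=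
  stmt_17_general a b φ Q G hG
end
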